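/- In the weighted plurality election of the previous construction (votes a ≻ p ≻ b with weights w₁,…,wₙ summing to 2K, a vote b ≻ p ≻ a of weight 3K, a vote p ≻ a ≻ b of weight 2K+1, tie-breaking a ≻ b ≻ p), suppose we may change only votes from the W-group subject to a total changed weight of at most K. Then p can be made the winner if and only if there exists W' ⊆ W with ∑_{w∈W'} w = K. -/

import Mathlib

inductive Cand : Type
  | p | a | b
deriving DecidableEq

open Cand

/-- Weighted plurality score: total weight of the votes ranking `x` first. -/
def plScore (E : Multiset (ℕ × List Cand)) (x : Cand) : ℕ :=
  (E.map fun v => if v.2.head? = some x then v.1 else 0).sum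

/-- `x` wins w.r.t. a score function and a tie-breaking priority order. -/
def Wins {S : Type} [LinearOrder S] (score : Cand → S) (prio : Cand → ℕ) (x : Cand) : Prop :=
  ∀ y, y ≠ x → score y < score x ∨ (score y = score x ∧ prio x < prio y)

/-- Tie-breaking order `a ≻ b ≻ p`. -/
def prioABP : Cand → ℕ
  | Cand.a => 0
  | Cand.b => 1
  | Cand.p => 2

/-!
After bribing a sub-multiset `Wc` of `W` with `∑ Wc ≤ K`, the candidate `p` gains at most `∑ Wc`
points, so it has at most `3K + 1 - (K - ∑ Wc)` points against the `3K` points of `b`; as `b`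
beats `p` in the tie-break, `p` can only win when `∑ Wc = K`. Conversely, if `∑ W' = K`,
moving `p` to the top of the votes in `W'` gives the scores `a : K`, `b : 3K`, `p : 3K + 1`.
-/

@[simp]
lemma plScore_add (A B : Multiset (ℕ × List Cand)) (x : Cand) :
    plScore (A + B) x = plScore A x + plScore B x := by
  simp [plScore]

@[simp]
lemma plScore_cons (v : ℕ × List Cand) (E : Multiset (ℕ × List Cand)) (x : Cand) :
    plScore (v ::ₘ E) x = (if v.2.head? = some x then v.1 else 0) + plScore E x := by
  simp [plScore]

@[simp]
lemma plScore_singleton (v : ℕ × List Cand) (x : Cand) :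
    plScore {v} x = if v.2.head? = some x then v.1 else 0 := by
  simp [plScore]

@[simp]
lemma plScore_map_const (M : Multiset ℕ) (l : List Cand) (x : Cand) :
    plScore (M.map fun w => (w, l)) x = if l.head? = some x then M.sum else 0 := by
  simp only [plScore, Multiset.map_map, Function.comp_def]
  split <;> simp_all

lemma plScore_le_sum_fst (V : Multiset (ℕ × List Cand)) (x : Cand) :
    plScore V x ≤ (V.map Prod.fst).sum :=
  Multiset.sum_map_le_sum_map _ _ fun v _ => by split <;> simp

lemma wins_prioABP_p_iff {S : Type} [LinearOrder S] (score : Cand → S) :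
    Wins score prioABP p ↔ score a < score p ∧ score b < score p := by
  constructor
  · intro h
    exact ⟨(h a (by decide)).resolve_right (by simp [prioABP]),
      (h b (by decide)).resolve_right (by simp [prioABP])⟩
  · rintro ⟨ha, hb⟩ y hy
    cases y with
    | p => exact absurd rfl hy
    | a => exact Or.inl ha
    | b => exact Or.inl hb

theorem stmt_3_general (K : ℕ) (W : Multiset ℕ) (hsum : W.sum = 2 * K) :
    (∃ Wc ≤ W, Wc.sum ≤ K ∧
      ∃ V : Multiset (ℕ × List Cand), V.map Prod.fst = Wc ∧
        (∀ v ∈ V, v.2.Perm [p, a, b]) ∧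
        Wins (plScore ((W - Wc).map (fun w => (w, [a, p, b])) + V +
          {(3 * K, [b, p, a]), (2 * K + 1, [p, a, b])})) prioABP p) ↔
    (∃ W' ≤ W, W'.sum = K) := by
  constructor
  · rintro ⟨_, hWc, hWcK, V, rfl, -, hwin⟩
    have hb := ((wins_prioABP_p_iff _).1 hwin).2
    have hVp := plScore_le_sum_fst V p
    simp at hb
    exact ⟨_, hWc, by omega⟩
  · rintro ⟨W', hW', hW'K⟩
    have hrest : (W - W').sum = K := by
      have := congrArg Multiset.sum (tsub_add_cancel_of_le hW')
      rw [Multiset.sum_add] at this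
      omega
    refine ⟨W', hW', hW'K.le, W'.map fun w => (w, [p, a, b]), by simp, by simp,
      (wins_prioABP_p_iff _).2 ?_⟩
    simp [hrest, hW'K]
    omega

/-- In the election with `W`-votes `a ≻ p ≻ b` (`∑ W = 2K`), a vote `b ≻ p ≻ a` of weight
`3K` and a vote `p ≻ a ≻ b` of weight `2K+1` (tie-breaking `a ≻ b ≻ p`), one may change
only `W`-votes of total changed weight at most `K` (to arbitrary linear orders): `p` can be
made the plurality winner iff some sub-multiset of `W` sums to exactly `K`. -/
theorem stmt_3 (K : ℕ) (hK : 0 < K) (W : Multiset ℕ)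
    (hpos : ∀ w ∈ W, 0 < w) (hsum : W.sum = 2 * K) :
    (∃ Wc ≤ W, Wc.sum ≤ K ∧
      ∃ V : Multiset (ℕ × List Cand), V.map Prod.fst = Wc ∧
        (∀ v ∈ V, v.2.Perm [p, a, b]) ∧
        Wins (plScore ((W - Wc).map (fun w => (w, [a, p, b])) + V +
          {(3 * K, [b, p, a]), (2 * K + 1, [p, a, b])})) prioABP p) ↔
    (∃ W' ≤ W, W'.sum = K) :=
  stmt_3_general K W hsum
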